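/- arXiv:1011.6410 — 6 statements merged into one kernel-verified Lean document; each statement's English description precedes it below -/
import Mathlib

section
/- Let K be an algebraically closed field, let V be a nonzero finite-dimensional K-vector space of dimension n, and let A, B : V → V be linear maps such that the rank of AB − BA is at most 1. Then A and B are simultaneously upper triangularizable: there exists a complete flag 0 = V₀ ⊂ V₁ ⊂ ⋯ ⊂ Vₙ = V of subspaces with dim Vᵢ = i such that every Vᵢ is invariant under both A and B. -/
/-!
Over an algebraically closed field it suffices to find a common eigenvector `v` of `A` and `B`:
the maps induced on `V ⧸ K ∙ v` again have a commutator of rank at most one, so induction on the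
dimension lifts their invariant flag to one of `V`.

For the common eigenvector, let `C = AB - BA` and let `μ` be an eigenvalue of `A`. For `x` in the
`μ`-eigenspace, `C x = (A - μ) (B x)`. If `C` vanishes on the eigenspace, `B` preserves it and has
an eigenvector there. Otherwise a nonzero `C x` spans the range of `C`, so
`range C ≤ range (A - μ)`; since `B (A - μ) = (A - μ) B - C`, the proper nonzero subspace
`range (A - μ)` is invariant under both maps, and we induct on the dimension.
-/

open Module Submodule

section Rank

variable {R M : Type*} [Ring R] [AddCommGroup M] [Module R M]

theorem LinearMap.rank_restrict_le (f : M →ₗ[R] M) {p : Submodule R M}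
    (hf : ∀ x ∈ p, f x ∈ p) : (f.restrict hf).rank ≤ f.rank := by
  have hfp : p.map f ≤ p := map_le_iff_le_comap.2 hf
  rw [LinearMap.rank, LinearMap.range_restrict, (comapSubtypeEquivOfLe hfp).rank_eq]
  exact Submodule.rank_mono LinearMap.map_le_range

theorem Submodule.rank_mapQ_le (f : M →ₗ[R] M) {p : Submodule R M} (hf : p ≤ p.comap f) :
    (p.mapQ p f hf).rank ≤ f.rank := by
  rw [LinearMap.rank, range_mapQ]
  exact rank_map_le _ _

theorem LinearMap.rank_restrict_commutator_le {A B : M →ₗ[R] M} {p : Submodule R M}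
    (hA : ∀ x ∈ p, A x ∈ p) (hB : ∀ x ∈ p, B x ∈ p) :
    (A.restrict hA ∘ₗ B.restrict hB - B.restrict hB ∘ₗ A.restrict hA).rank ≤
      (A ∘ₗ B - B ∘ₗ A).rank := by
  have hC : ∀ x ∈ p, (A ∘ₗ B - B ∘ₗ A) x ∈ p := fun x hx =>
    p.sub_mem (hA _ (hB x hx)) (hB _ (hA x hx))
  convert (A ∘ₗ B - B ∘ₗ A).rank_restrict_le hC using 2
  ext
  simp

theorem Submodule.rank_mapQ_commutator_le {A B : M →ₗ[R] M} {p : Submodule R M}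
    (hA : p ≤ p.comap A) (hB : p ≤ p.comap B) :
    (p.mapQ p A hA ∘ₗ p.mapQ p B hB - p.mapQ p B hB ∘ₗ p.mapQ p A hA).rank ≤
      (A ∘ₗ B - B ∘ₗ A).rank := by
  have hC : p ≤ p.comap (A ∘ₗ B - B ∘ₗ A) := fun x hx =>
    p.sub_mem (hA (hB hx)) (hB (hA hx))
  convert Submodule.rank_mapQ_le (A ∘ₗ B - B ∘ₗ A) hC using 2
  ext
  simp

end Rank

theorem LinearMap.range_le_span_singleton_of_rank_le_one {K V W : Type*} [DivisionRing K]
    [AddCommGroup V] [Module K V] [AddCommGroup W] [Module K W] {f : V →ₗ[K] W}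
    (hf : f.rank ≤ 1) {x : V} (hx : f x ≠ 0) : range f ≤ K ∙ f x := by
  rintro _ ⟨y, rfl⟩
  obtain ⟨v, hv⟩ := rank_le_one_iff.mp hf
  obtain ⟨r, hr⟩ := hv ⟨f y, y, rfl⟩
  obtain ⟨s, hs⟩ := hv ⟨f x, x, rfl⟩
  have hs0 : s ≠ 0 := by
    rintro rfl
    exact hx (by simpa using (congrArg Subtype.val hs).symm)
  have hyx : (⟨f y, y, rfl⟩ : range f) = (r * s⁻¹) • ⟨f x, x, rfl⟩ := by
    rw [← hr, ← hs, smul_smul, mul_assoc, inv_mul_cancel₀ hs0, mul_one]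
  exact mem_span_singleton.2 ⟨r * s⁻¹, congrArg Subtype.val hyx.symm⟩

namespace Module.End

variable {K V : Type*} [Field K] [AddCommGroup V] [Module K V]

theorem HasEigenvector.of_restrict {R M : Type*} [CommRing R] [AddCommGroup M] [Module R M]
    {f : End R M} {p : Submodule R M} (hf : ∀ x ∈ p, f x ∈ p) {μ : R} {x : p}
    (h : HasEigenvector (f.restrict hf) μ x) : f.HasEigenvector μ x :=
  ⟨eigenspace_restrict_le_eigenspace f hf μ ⟨x, h.1, rfl⟩, by simpa using h.2⟩

theorem exists_hasEigenvector_mem [IsAlgClosed K] [FiniteDimensional K V] (f : End K V)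
    {p : Submodule K V} (hp : p ≠ ⊥) (hf : ∀ x ∈ p, f x ∈ p) :
    ∃ μ, ∃ x ∈ p, f.HasEigenvector μ x := by
  have : Nontrivial p := nontrivial_iff_ne_bot.2 hp
  obtain ⟨μ, hμ⟩ := exists_eigenvalue (f.restrict hf)
  obtain ⟨x, hx⟩ := hμ.exists_hasEigenvector
  exact ⟨μ, x, x.2, HasEigenvector.of_restrict hf hx⟩

theorem span_singleton_le_comap_of_hasEigenvector {f : End K V} {μ : K} {v : V}
    (hv : f.HasEigenvector μ v) : K ∙ v ≤ (K ∙ v).comap f := by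
  rw [span_singleton_le_iff_mem, mem_comap, hv.apply_eq_smul]
  exact smul_mem _ _ (mem_span_singleton_self v)

end Module.End

section CommonEigenvector

variable {K V : Type*} [Field K] [AddCommGroup V] [Module K V]

theorem commutator_apply_of_mem_eigenspace (A B : V →ₗ[K] V) {μ : K} {x : V}
    (hx : x ∈ End.eigenspace A μ) : (A ∘ₗ B - B ∘ₗ A) x = (A - μ • 1) (B x) := by
  rw [End.mem_eigenspace_iff] at hx
  simp [hx]

theorem mapsTo_range_sub_smul_one {A B : V →ₗ[K] V} (μ : K)
    (h : LinearMap.range (A ∘ₗ B - B ∘ₗ A) ≤ LinearMap.range (A - μ • 1)) :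
    (∀ y ∈ LinearMap.range (A - μ • 1), A y ∈ LinearMap.range (A - μ • 1)) ∧
      ∀ y ∈ LinearMap.range (A - μ • 1), B y ∈ LinearMap.range (A - μ • 1) := by
  constructor
  · rintro _ ⟨x, rfl⟩
    exact ⟨A x, by simp⟩
  · rintro _ ⟨x, rfl⟩
    have hBx : B ((A - μ • 1) x) = (A - μ • 1) (B x) - (A ∘ₗ B - B ∘ₗ A) x := by
      simp
    rw [hBx]
    exact sub_mem ⟨B x, rfl⟩ (h ⟨x, rfl⟩)

theorem exists_common_eigenvector_or_exists_invariant_submodule [IsAlgClosed K]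
    [FiniteDimensional K V] [Nontrivial V] (A B : V →ₗ[K] V)
    (hrank : (A ∘ₗ B - B ∘ₗ A).rank ≤ 1) :
    (∃ v μ ν, End.HasEigenvector A μ v ∧ End.HasEigenvector B ν v) ∨
      ∃ U : Submodule K V, U ≠ ⊥ ∧ U ≠ ⊤ ∧ (∀ x ∈ U, A x ∈ U) ∧ ∀ x ∈ U, B x ∈ U := by
  obtain ⟨μ, hμ⟩ := End.exists_eigenvalue A
  by_cases hC : ∀ x ∈ End.eigenspace A μ, (A ∘ₗ B - B ∘ₗ A) x = 0
  · left
    have hB : ∀ x ∈ End.eigenspace A μ, B x ∈ End.eigenspace A μ := fun x hx => by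
      rw [End.eigenspace_def, LinearMap.mem_ker, ← commutator_apply_of_mem_eigenspace A B hx]
      exact hC x hx
    obtain ⟨ν, v, hvA, hvB⟩ := End.exists_hasEigenvector_mem B hμ hB
    exact ⟨v, μ, ν, ⟨hvA, hvB.2⟩, hvB⟩
  · right
    push Not at hC
    obtain ⟨x, hx, hCx⟩ := hC
    have hCx_mem : (A ∘ₗ B - B ∘ₗ A) x ∈ LinearMap.range (A - μ • 1) := by
      rw [commutator_apply_of_mem_eigenspace A B hx]
      exact ⟨B x, rfl⟩
    refine ⟨LinearMap.range (A - μ • 1), ?_, ?_, mapsTo_range_sub_smul_one μ ?_⟩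
    · exact fun h => hCx (by simpa [h] using hCx_mem)
    · rw [Ne, LinearMap.range_eq_top, ← LinearMap.injective_iff_surjective,
        ← LinearMap.ker_eq_bot, ← End.eigenspace_def]
      exact hμ
    · calc LinearMap.range (A ∘ₗ B - B ∘ₗ A)
          ≤ K ∙ (A ∘ₗ B - B ∘ₗ A) x :=
            LinearMap.range_le_span_singleton_of_rank_le_one hrank hCx
        _ ≤ LinearMap.range (A - μ • 1) := span_singleton_le_iff_mem _ _ |>.2 hCx_mem

theorem exists_common_eigenvector_of_rank_commutator_le_one [IsAlgClosed K]
    [FiniteDimensional K V] [Nontrivial V] (A B : V →ₗ[K] V)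
    (hrank : (A ∘ₗ B - B ∘ₗ A).rank ≤ 1) :
    ∃ v μ ν, End.HasEigenvector A μ v ∧ End.HasEigenvector B ν v := by
  induction h : finrank K V using Nat.strong_induction_on generalizing V with
  | _ n ih =>
  obtain hv | ⟨U, hU_bot, hU_top, hA, hB⟩ :=
    exists_common_eigenvector_or_exists_invariant_submodule A B hrank
  · exact hv
  have : Nontrivial U := nontrivial_iff_ne_bot.2 hU_bot
  obtain ⟨v, μ, ν, hvA, hvB⟩ := ih _ (h ▸ finrank_lt hU_top) (A.restrict hA) (B.restrict hB)
    ((LinearMap.rank_restrict_commutator_le hA hB).trans hrank) rfl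
  exact ⟨v, μ, ν, hvA.of_restrict hA, hvB.of_restrict hB⟩

end CommonEigenvector

namespace Submodule

variable {K V : Type*} [Field K] [AddCommGroup V] [Module K V]

theorem finrank_comap_mkQ [FiniteDimensional K V] (p : Submodule K V)
    (q : Submodule K (V ⧸ p)) : finrank K (q.comap p.mkQ) = finrank K q + finrank K p := by
  have key := LinearMap.finrank_range_add_finrank_ker (p.mkQ.domRestrict (q.comap p.mkQ))
  rw [LinearMap.range_domRestrict, map_comap_eq, range_mkQ, top_inf_eq,
    LinearMap.ker_domRestrict, ker_mkQ,
    (comapSubtypeEquivOfLe (le_comap_mkQ p q)).finrank_eq] at key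
  exact key.symm

variable {n : ℕ}

def liftFlag (p : Submodule K V) (W : Fin (n + 1) → Submodule K (V ⧸ p)) :
    Fin (n + 2) → Submodule K V :=
  Matrix.vecCons ⊥ fun i => (W i).comap p.mkQ

variable (p : Submodule K V) {W : Fin (n + 1) → Submodule K (V ⧸ p)}

@[simp] theorem liftFlag_zero : p.liftFlag W 0 = ⊥ := rfl

@[simp] theorem liftFlag_succ (i : Fin (n + 1)) : p.liftFlag W i.succ = (W i).comap p.mkQ :=
  rfl

theorem monotone_liftFlag (hW : Monotone W) : Monotone (p.liftFlag W) :=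
  ((gc_map_comap p.mkQ).monotone_u.comp hW).vecCons bot_le

theorem liftFlag_last (hW : W (Fin.last n) = ⊤) : p.liftFlag W (Fin.last (n + 1)) = ⊤ := by
  rw [← Fin.succ_last, liftFlag_succ, hW, comap_top]

theorem finrank_liftFlag [FiniteDimensional K V] (hp : finrank K p = 1)
    (hW : ∀ i, finrank K (W i) = i) (i : Fin (n + 2)) : finrank K (p.liftFlag W i) = i := by
  cases i using Fin.cases with
  | zero => exact finrank_bot K V
  | succ i => rw [liftFlag_succ, finrank_comap_mkQ, hW, hp, Fin.val_succ]

theorem mapsTo_liftFlag {f : V →ₗ[K] V} (hf : p ≤ p.comap f)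
    (hW : ∀ i, ∀ x ∈ W i, p.mapQ p f hf x ∈ W i) (i : Fin (n + 2)) :
    ∀ x ∈ p.liftFlag W i, f x ∈ p.liftFlag W i := by
  cases i using Fin.cases with
  | zero => simp
  | succ i => exact fun x hx => hW i _ hx

end Submodule

theorem simultaneously_triangularizable_of_commutator_rank_le_one_general
    (K : Type*) [Field K] [IsAlgClosed K]
    (V : Type*) [AddCommGroup V] [Module K V] [FiniteDimensional K V]
    (n : ℕ) (hn : Module.finrank K V = n)
    (A B : V →ₗ[K] V)
    (hrank : LinearMap.rank (A ∘ₗ B - B ∘ₗ A) ≤ 1) :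
    ∃ W : Fin (n + 1) → Submodule K V,
      Monotone W ∧ W 0 = ⊥ ∧ W (Fin.last n) = ⊤ ∧
      (∀ i : Fin (n + 1), Module.finrank K (W i) = (i : ℕ)) ∧
      (∀ i : Fin (n + 1), ∀ x ∈ W i, A x ∈ W i ∧ B x ∈ W i) := by
  induction n generalizing V with
  | zero =>
    have hbot : (⊥ : Submodule K V) = ⊤ := (finrank_eq_zero.1 (by rw [finrank_top, hn])).symm
    refine ⟨fun _ => ⊥, monotone_const, rfl, hbot, fun i => by simp, ?_⟩
    simp
  | succ n ih =>
    have : Nontrivial V := nontrivial_of_finrank_eq_succ hn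
    obtain ⟨v, μ, ν, hvA, hvB⟩ := exists_common_eigenvector_of_rank_commutator_le_one A B hrank
    set L := K ∙ v
    have hAL := End.span_singleton_le_comap_of_hasEigenvector hvA
    have hBL := End.span_singleton_le_comap_of_hasEigenvector hvB
    have hquot : finrank K (V ⧸ L) = n := by
      have := L.finrank_quotient_add_finrank
      rw [finrank_span_singleton hvA.2] at this
      omega
    obtain ⟨W, hmono, -, hlast, hdim, hinv⟩ := ih (V ⧸ L) hquot (L.mapQ L A hAL)
      (L.mapQ L B hBL) ((rank_mapQ_commutator_le hAL hBL).trans hrank)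
    refine ⟨L.liftFlag W, L.monotone_liftFlag hmono, rfl, L.liftFlag_last hlast,
      L.finrank_liftFlag (finrank_span_singleton hvA.2) hdim, fun i x hx => ⟨?_, ?_⟩⟩
    · exact L.mapsTo_liftFlag hAL (fun j y hy => (hinv j y hy).1) i x hx
    · exact L.mapsTo_liftFlag hBL (fun j y hy => (hinv j y hy).2) i x hx

/-- Two endomorphisms of a nonzero finite-dimensional vector space over an
algebraically closed field whose commutator has rank at most 1 are simultaneously
upper triangularizable: there is a complete invariant flag. -/
theorem simultaneously_triangularizable_of_commutator_rank_le_one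
    (K : Type*) [Field K] [IsAlgClosed K]
    (V : Type*) [AddCommGroup V] [Module K V] [FiniteDimensional K V]
    (n : ℕ) (hn : Module.finrank K V = n) (hn0 : n ≠ 0)
    (A B : V →ₗ[K] V)
    (hrank : LinearMap.rank (A ∘ₗ B - B ∘ₗ A) ≤ 1) :
    ∃ W : Fin (n + 1) → Submodule K V,
      Monotone W ∧ W 0 = ⊥ ∧ W (Fin.last n) = ⊤ ∧
      (∀ i : Fin (n + 1), Module.finrank K (W i) = (i : ℕ)) ∧
      (∀ i : Fin (n + 1), ∀ x ∈ W i, A x ∈ W i ∧ B x ∈ W i) :=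
  simultaneously_triangularizable_of_commutator_rank_le_one_general K V n hn A B hrank
end

section
/- Let K be an algebraically closed field, let V be a nonzero finite-dimensional K-vector space of dimension n, and let A, B : V → V be invertible linear maps such that the rank of ABA⁻¹B⁻¹ − id_V is at most 1. Then A and B are simultaneously upper triangularizable: there exists a complete flag 0 = V₀ ⊂ V₁ ⊂ ⋯ ⊂ Vₙ = V of subspaces with dim Vᵢ = i such that every Vᵢ is invariant under both A and B. -/
/-! Since `⁅A, B⁆ = (ABA⁻¹B⁻¹ - 1)BA`, it suffices to triangularize endomorphisms `f`, `g` with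
`rank ⁅f, g⁆ ≤ 1`, and by passing to the quotient by a common eigenline it suffices that such a
pair has a common eigenvector. Let `μ` be an eigenvalue of `f`. If `⁅f, g⁆` vanishes on the
`μ`-eigenspace, `g` preserves it and has an eigenvector there. Otherwise `⁅f, g⁆ v = (f - μ)(g v)`
is nonzero for some eigenvector `v`, so the line `range ⁅f, g⁆` lies in `range (f - μ)`. That
proper nonzero subspace is then invariant under `f` and `g`, and we induct on the dimension. -/

open Module Submodule

namespace LinearMap

variable {K V W : Type*} [Field K] [AddCommGroup V] [Module K V] [AddCommGroup W] [Module K W]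

theorem range_le_span_singleton_of_rank_le_one_s1 {C : V →ₗ[K] W} (hC : rank C ≤ 1) {v : V}
    (hv : C v ≠ 0) : range C ≤ K ∙ C v := by
  obtain ⟨w, hw⟩ := (rank_submodule_le_one_iff' (range C)).mp hC
  obtain ⟨r, hr⟩ := mem_span_singleton.mp (hw (mem_range_self C v))
  have hr0 : r ≠ 0 := by rintro rfl; exact hv (by simpa using hr.symm)
  rwa [← hr, span_singleton_smul_eq (IsUnit.mk0 r hr0)]

theorem rank_restrict_le_s1 {p : Submodule K V} (f : Module.End K V) (hf : ∀ x ∈ p, f x ∈ p) :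
    rank (f.restrict hf) ≤ rank f := calc
  rank (f.restrict hf) = Module.rank K ((range (f.restrict hf)).map p.subtype) :=
    (rank_map_eq p.injective_subtype _).symm
  _ = rank (f ∘ₗ p.subtype) := by rw [rank, ← range_comp, subtype_comp_restrict]; rfl
  _ ≤ rank f := rank_comp_le_left _ _

theorem rank_mapQ_le {p : Submodule K V} (f : Module.End K V) (hf : p ≤ p.comap f) :
    rank (p.mapQ p f hf) ≤ rank f := calc
  rank (p.mapQ p f hf) = rank (p.mkQ ∘ₗ f) := by
    rw [rank, rank, ← mapQ_mkQ, range_comp_of_range_eq_top _ (range_mkQ p)]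
  _ ≤ rank f := rank_comp_le_right _ _

end LinearMap

section Flag

variable {K V : Type*} [Field K] [AddCommGroup V] [Module K V]

def IsCompleteFlag {n : ℕ} (W : Fin (n + 1) → Submodule K V) : Prop :=
  Monotone W ∧ W 0 = ⊥ ∧ W (Fin.last n) = ⊤ ∧ ∀ i : Fin (n + 1), finrank K (W i) = i

theorem Submodule.finrank_comap_mkQ_s1 [FiniteDimensional K V] (L : Submodule K V)
    (W : Submodule K (V ⧸ L)) : finrank K (W.comap L.mkQ) = finrank K W + finrank K L := by
  rw [← (L.mkQ.domRestrict (W.comap L.mkQ)).finrank_range_add_finrank_ker,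
    LinearMap.range_domRestrict, map_comap_eq_of_surjective L.mkQ_surjective,
    LinearMap.ker_domRestrict, ker_mkQ, (comapSubtypeEquivOfLe (le_comap_mkQ L W)).finrank_eq]

def Submodule.consComapMkQ {n : ℕ} (L : Submodule K V) (W : Fin (n + 1) → Submodule K (V ⧸ L)) :
    Fin (n + 2) → Submodule K V :=
  Fin.cons ⊥ fun i ↦ (W i).comap L.mkQ

@[simp]
theorem Submodule.consComapMkQ_zero {n : ℕ} (L : Submodule K V)
    (W : Fin (n + 1) → Submodule K (V ⧸ L)) : L.consComapMkQ W 0 = ⊥ :=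
  rfl

@[simp]
theorem Submodule.consComapMkQ_succ {n : ℕ} (L : Submodule K V)
    (W : Fin (n + 1) → Submodule K (V ⧸ L)) (i : Fin (n + 1)) :
    L.consComapMkQ W i.succ = (W i).comap L.mkQ :=
  rfl

theorem IsCompleteFlag.consComapMkQ [FiniteDimensional K V] {n : ℕ} {L : Submodule K V}
    (hL : finrank K L = 1) {W : Fin (n + 1) → Submodule K (V ⧸ L)} (hW : IsCompleteFlag W) :
    IsCompleteFlag (L.consComapMkQ W) := by
  obtain ⟨hmono, -, htop, hdim⟩ := hW
  refine ⟨Fin.monotone_iff_le_succ.mpr fun i ↦ ?_, rfl, ?_, fun i ↦ ?_⟩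
  · obtain rfl | ⟨i, rfl⟩ := i.eq_zero_or_eq_succ
    · exact bot_le
    · exact comap_mono (hmono i.castSucc_le_succ)
  · simp [← Fin.succ_last, htop]
  · obtain rfl | ⟨i, rfl⟩ := i.eq_zero_or_eq_succ
    · rw [consComapMkQ_zero, finrank_bot, Fin.val_zero]
    · rw [consComapMkQ_succ, finrank_comap_mkQ_s1, hdim, hL, Fin.val_succ]

theorem Submodule.mem_consComapMkQ_of_mapQ {n : ℕ} {L : Submodule K V}
    {W : Fin (n + 1) → Submodule K (V ⧸ L)} {f : Module.End K V} (hfL : L ≤ L.comap f)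
    (hW : ∀ i, ∀ x ∈ W i, L.mapQ L f hfL x ∈ W i) :
    ∀ i, ∀ x ∈ L.consComapMkQ W i, f x ∈ L.consComapMkQ W i := by
  intro i x hx
  obtain rfl | ⟨i, rfl⟩ := i.eq_zero_or_eq_succ
  · simp_all
  · exact hW i _ hx

end Flag

namespace Module.End

variable {K V : Type*} [Field K] [AddCommGroup V] [Module K V]

theorem rank_lie_restrict_le {p : Submodule K V} {f g : End K V} (hf : ∀ x ∈ p, f x ∈ p)
    (hg : ∀ x ∈ p, g x ∈ p) :
    LinearMap.rank ⁅f.restrict hf, g.restrict hg⁆ ≤ LinearMap.rank ⁅f, g⁆ := by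
  have hfg : ∀ x ∈ p, ⁅f, g⁆ x ∈ p := fun x hx ↦ by
    simpa [Ring.lie_def] using p.sub_mem (hf _ (hg x hx)) (hg _ (hf x hx))
  have : ⁅f.restrict hf, g.restrict hg⁆ = ⁅f, g⁆.restrict hfg := by
    ext x
    simp [Ring.lie_def]
  exact this ▸ LinearMap.rank_restrict_le_s1 _ hfg

theorem rank_lie_mapQ_le {p : Submodule K V} {f g : End K V} (hf : p ≤ p.comap f)
    (hg : p ≤ p.comap g) :
    LinearMap.rank ⁅p.mapQ p f hf, p.mapQ p g hg⁆ ≤ LinearMap.rank ⁅f, g⁆ := by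
  have hfg : p ≤ p.comap ⁅f, g⁆ := fun x hx ↦ by
    simpa [Ring.lie_def] using p.sub_mem (hf (hg hx)) (hg (hf hx))
  have : ⁅p.mapQ p f hf, p.mapQ p g hg⁆ = p.mapQ p ⁅f, g⁆ hfg := by
    ext x
    simp [Ring.lie_def]
  exact this ▸ LinearMap.rank_mapQ_le _ hfg

def HasCommonEigenvector (f g : End K V) : Prop :=
  ∃ v μ ν, f.HasEigenvector μ v ∧ g.HasEigenvector ν v

theorem HasCommonEigenvector.of_restrict {p : Submodule K V} {f g : End K V}
    (hf : ∀ x ∈ p, f x ∈ p) (hg : ∀ x ∈ p, g x ∈ p)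
    (h : HasCommonEigenvector (f.restrict hf) (g.restrict hg)) : HasCommonEigenvector f g := by
  obtain ⟨v, μ, ν, hfv, hgv⟩ := h
  have hv : (v : V) ≠ 0 := by simpa using hfv.2
  exact ⟨v, μ, ν, ⟨eigenspace_restrict_le_eigenspace f hf μ ⟨v, hfv.1, rfl⟩, hv⟩,
    ⟨eigenspace_restrict_le_eigenspace g hg ν ⟨v, hgv.1, rfl⟩, hv⟩⟩

theorem hasCommonEigenvector_of_le_eigenspace [IsAlgClosed K] [FiniteDimensional K V]
    {f g : End K V} {μ : K} {p : Submodule K V} (hp : p ≠ ⊥) (hpf : p ≤ f.eigenspace μ)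
    (hg : ∀ x ∈ p, g x ∈ p) : HasCommonEigenvector f g := by
  have hf : ∀ x ∈ p, f x ∈ p := fun x hx ↦ by
    rw [mem_eigenspace_iff.mp (hpf hx)]; exact p.smul_mem μ hx
  have : Nontrivial p := nontrivial_iff_ne_bot.mpr hp
  obtain ⟨ν, hν⟩ := exists_eigenvalue (g.restrict hg)
  obtain ⟨w, hw⟩ := hν.exists_hasEigenvector
  refine .of_restrict hf hg ⟨w, μ, ν, ⟨?_, hw.2⟩, hw⟩
  exact mem_eigenspace_iff.mpr (Subtype.ext (mem_eigenspace_iff.mp (hpf w.2)))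

theorem lie_sub_smul_one (f g : End K V) (μ : K) : ⁅f - μ • 1, g⁆ = ⁅f, g⁆ := by
  simp [Ring.lie_def, sub_mul, mul_sub]

theorem apply_mem_range_of_range_lie_le {h g : End K V}
    (hC : LinearMap.range ⁅h, g⁆ ≤ LinearMap.range h) :
    ∀ x ∈ LinearMap.range h, g x ∈ LinearMap.range h := by
  rintro _ ⟨y, rfl⟩
  have : g (h y) = h (g y) - ⁅h, g⁆ y := by simp [Ring.lie_def]
  exact this ▸ sub_mem (LinearMap.mem_range_self h _) (hC (LinearMap.mem_range_self _ y))

theorem hasCommonEigenvector_of_rank_lie_le_one [IsAlgClosed K] [FiniteDimensional K V]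
    [Nontrivial V] {f g : End K V} (hfg : LinearMap.rank ⁅f, g⁆ ≤ 1) :
    HasCommonEigenvector f g := by
  induction hn : finrank K V using Nat.strong_induction_on generalizing V with
  | _ n ih =>
  obtain ⟨μ, hμ⟩ := exists_eigenvalue f
  by_cases hE : f.eigenspace μ ≤ LinearMap.ker ⁅f, g⁆
  · refine hasCommonEigenvector_of_le_eigenspace hμ le_rfl fun x hx ↦ ?_
    have hcomm : f (g x) = g (f x) := by
      simpa [Ring.lie_def, sub_eq_zero] using LinearMap.mem_ker.mp (hE hx)
    rw [mem_eigenspace_iff] at hx ⊢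
    rw [hcomm, hx, map_smul]
  obtain ⟨v, hvE, hvC⟩ := SetLike.not_le_iff_exists.mp hE
  set h := f - μ • 1
  have hv : h v = 0 := by simpa [h, sub_eq_zero] using mem_eigenspace_iff.mp hvE
  have hCv : ⁅f, g⁆ v = h (g v) := by
    simp [h, Ring.lie_def, mem_eigenspace_iff.mp hvE]
  have hCR : LinearMap.range ⁅f, g⁆ ≤ LinearMap.range h :=
    (LinearMap.range_le_span_singleton_of_rank_le_one_s1 hfg hvC).trans
      (span_singleton_le_iff_mem _ _ |>.mpr (hCv ▸ LinearMap.mem_range_self h _))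
  have hfR := apply_mem_range_of_range_lie_le (g := f) (h := h) <| by
    simp [h, Ring.lie_def, sub_mul, mul_sub]
  have hgR := apply_mem_range_of_range_lie_le (g := g) (h := h) <| by
    rwa [lie_sub_smul_one]
  have hR_ne_bot : LinearMap.range h ≠ ⊥ := fun hR ↦
    hvC (by simpa [hR] using hCR (LinearMap.mem_range_self _ v))
  have hR_lt : finrank K (LinearMap.range h) < n := by
    refine hn ▸ Submodule.finrank_lt fun htop ↦ ?_
    have hinj := LinearMap.injective_iff_surjective.mpr (LinearMap.range_eq_top.mp htop)
    exact hvC (by rw [hinj (hv.trans h.map_zero.symm), LinearMap.mem_ker, map_zero])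
  have : Nontrivial (LinearMap.range h) := nontrivial_iff_ne_bot.mpr hR_ne_bot
  exact .of_restrict hfR hgR <| ih _ hR_lt ((rank_lie_restrict_le hfR hgR).trans hfg) rfl

theorem span_singleton_le_comap_of_mem_eigenspace {f : End K V} {μ : K} {v : V}
    (hv : v ∈ f.eigenspace μ) : K ∙ v ≤ (K ∙ v).comap f := by
  rw [span_singleton_le_iff_mem, mem_comap, mem_eigenspace_iff.mp hv]
  exact smul_mem _ μ (mem_span_singleton_self v)

theorem exists_isCompleteFlag_of_rank_lie_le_one [IsAlgClosed K] [FiniteDimensional K V]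
    {n : ℕ} (hn : finrank K V = n) {f g : End K V} (hfg : LinearMap.rank ⁅f, g⁆ ≤ 1) :
    ∃ W : Fin (n + 1) → Submodule K V,
      IsCompleteFlag W ∧ ∀ i, ∀ x ∈ W i, f x ∈ W i ∧ g x ∈ W i := by
  induction n generalizing V with
  | zero =>
    have : Subsingleton V := finrank_zero_iff.mp hn
    refine ⟨fun _ ↦ ⊥, ⟨monotone_const, rfl, Subsingleton.elim _ _, fun i ↦ ?_⟩, by simp⟩
    rw [Fin.fin_one_eq_zero i, finrank_bot, Fin.val_zero]
  | succ n ih =>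
    have : Nontrivial V := nontrivial_of_finrank_eq_succ hn
    obtain ⟨v, μ, ν, hfv, hgv⟩ := hasCommonEigenvector_of_rank_lie_le_one hfg
    have hL : finrank K (K ∙ v) = 1 := finrank_span_singleton hfv.2
    have hfL := span_singleton_le_comap_of_mem_eigenspace hfv.1
    have hgL := span_singleton_le_comap_of_mem_eigenspace hgv.1
    have hQ : finrank K (V ⧸ K ∙ v) = n := by
      have := (K ∙ v).finrank_quotient_add_finrank
      omega
    obtain ⟨W, hW, hinv⟩ := ih hQ ((rank_lie_mapQ_le hfL hgL).trans hfg)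
    refine ⟨_, hW.consComapMkQ hL, fun i x hx ↦ ⟨?_, ?_⟩⟩
    · exact mem_consComapMkQ_of_mapQ hfL (fun i x hx ↦ (hinv i x hx).1) i x hx
    · exact mem_consComapMkQ_of_mapQ hgL (fun i x hx ↦ (hinv i x hx).2) i x hx

end Module.End

theorem LinearEquiv.rank_lie_le_rank_commutator_sub_id {K V : Type*} [Field K] [AddCommGroup V]
    [Module K V] (A B : V ≃ₗ[K] V) :
    LinearMap.rank ⁅A.toLinearMap, B.toLinearMap⁆ ≤ LinearMap.rank
      ((A.toLinearMap ∘ₗ B.toLinearMap ∘ₗ A.symm.toLinearMap ∘ₗ B.symm.toLinearMap)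
        - LinearMap.id) := by
  have : ⁅A.toLinearMap, B.toLinearMap⁆ =
      ((A.toLinearMap ∘ₗ B.toLinearMap ∘ₗ A.symm.toLinearMap ∘ₗ B.symm.toLinearMap)
        - LinearMap.id) ∘ₗ (B.toLinearMap ∘ₗ A.toLinearMap) := by
    ext x
    simp [Ring.lie_def]
  exact this ▸ LinearMap.rank_comp_le_left _ _

theorem simultaneously_triangularizable_of_multiplicative_commutator_rank_le_one_general
    (K : Type*) [Field K] [IsAlgClosed K]
    (V : Type*) [AddCommGroup V] [Module K V] [FiniteDimensional K V]
    (n : ℕ) (hn : Module.finrank K V = n)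
    (A B : V ≃ₗ[K] V)
    (hrank : LinearMap.rank
      ((A.toLinearMap ∘ₗ B.toLinearMap ∘ₗ A.symm.toLinearMap ∘ₗ B.symm.toLinearMap)
        - LinearMap.id) ≤ 1) :
    ∃ W : Fin (n + 1) → Submodule K V,
      Monotone W ∧ W 0 = ⊥ ∧ W (Fin.last n) = ⊤ ∧
      (∀ i : Fin (n + 1), Module.finrank K (W i) = (i : ℕ)) ∧
      (∀ i : Fin (n + 1), ∀ x ∈ W i, A x ∈ W i ∧ B x ∈ W i) := by
  obtain ⟨W, ⟨hmono, hbot, htop, hdim⟩, hinv⟩ :=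
    Module.End.exists_isCompleteFlag_of_rank_lie_le_one hn
      ((A.rank_lie_le_rank_commutator_sub_id B).trans hrank)
  exact ⟨W, hmono, hbot, htop, hdim, hinv⟩

/-- Two invertible endomorphisms `A`, `B` of a nonzero finite-dimensional vector
space over an algebraically closed field such that `ABA⁻¹B⁻¹ − 1` has rank at most 1
are simultaneously upper triangularizable: there is a complete flag invariant under
both of them. -/
theorem simultaneously_triangularizable_of_multiplicative_commutator_rank_le_one
    (K : Type*) [Field K] [IsAlgClosed K]
    (V : Type*) [AddCommGroup V] [Module K V] [FiniteDimensional K V]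
    (n : ℕ) (hn : Module.finrank K V = n) (hn0 : n ≠ 0)
    (A B : V ≃ₗ[K] V)
    (hrank : LinearMap.rank
      ((A.toLinearMap ∘ₗ B.toLinearMap ∘ₗ A.symm.toLinearMap ∘ₗ B.symm.toLinearMap)
        - LinearMap.id) ≤ 1) :
    ∃ W : Fin (n + 1) → Submodule K V,
      Monotone W ∧ W 0 = ⊥ ∧ W (Fin.last n) = ⊤ ∧
      (∀ i : Fin (n + 1), Module.finrank K (W i) = (i : ℕ)) ∧
      (∀ i : Fin (n + 1), ∀ x ∈ W i, A x ∈ W i ∧ B x ∈ W i) :=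
  simultaneously_triangularizable_of_multiplicative_commutator_rank_le_one_general K V n hn A B
    hrank
end

section
/- Let (a_k)_{k≥0} and (b_k)_{k≥0} be complex numbers with a₀ = −3 and b₀ = 3, and set a = Σ_{k≥0} a_k z^{k−2} and b = Σ_{k≥0} b_k z^{k−3} in ℂ((z)); thus the third-order operator L = ∂³ + a(z)∂ + b(z) has indicial polynomial (m+1)(m−1)(m−3) at z = 0, i.e., indices −1, 1, 3 (gaps q = r = 2). Then the following are equivalent: (a) for every λ ∈ ℂ, the set of ψ ∈ ℂ((z)) satisfying ψ''' + aψ' + bψ = λψ contains three linearly independent elements; (b) a₁ = 0, b₂ = 0, a₂ = −b₁²/3, and b₄ = a₄ + (b₁a₃)/3. -/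
open HahnSeries

/-- The formal derivative of a formal Laurent series `Σₙ aₙ zⁿ ↦ Σₙ n aₙ z^{n−1}`. -/
noncomputable def laurentDeriv (f : LaurentSeries ℂ) : LaurentSeries ℂ where
  coeff n := ((n + 1 : ℤ) : ℂ) * f.coeff (n + 1)
  isPWO_support' := by
    refine Set.IsPWO.mono (Set.IsPWO.image_of_monotone f.isPWO_support
      (f := fun m : ℤ => m - 1) (fun a b hab => by simpa using hab)) ?_
    intro n hn
    have h1 : f.coeff (n + 1) ≠ 0 := by
      intro h0
      simp only [Function.mem_support, h0, mul_zero, ne_eq, not_true_eq_false] at hn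
    exact ⟨n + 1, h1, by ring⟩

/-!
Replacing `b₃` by `b₃ - λ` turns `Lψ = λψ` into `L'ψ = 0` with `L'` of the same shape. Writing
`ψ = z^m Σ cⱼ zʲ`, the equation `Lψ = 0` becomes the Frobenius recursion
`P(j+m) cⱼ + Σ_{l<j} (a_{j-l} (l+m) + b_{j-l}) c_l = 0` with indicial polynomial
`P(s) = (s+1)(s-1)(s-3)`. Hence every solution lies in `z⁻¹ℂ[[z]]` and is determined by its
coefficients at the indices `-1, 1, 3`, so three independent solutions exist iff every choice of
these coefficients extends to a solution, i.e. iff the recursion is consistent at the resonant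
steps `j = 2, 4`. These two conditions are polynomial in the `aₖ`, `bₖ` and `λ`; demanding them
for all `λ` gives the four equations.
-/

open PowerSeries (coeff mk)

theorem Submodule.map_eq_top_iff_exists_linearIndependent {K V W ι : Type*} [DivisionRing K]
    [AddCommGroup V] [Module K V] [AddCommGroup W] [Module K W] [FiniteDimensional K W]
    [Fintype ι] {S : Submodule K V} {f : V →ₗ[K] W} (hS : Disjoint S (LinearMap.ker f))
    (hι : Fintype.card ι = Module.finrank K W) :
    S.map f = ⊤ ↔ ∃ v : ι → V, (∀ i, v i ∈ S) ∧ LinearIndependent K v := by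
  constructor
  · intro htop
    let b := (Module.finBasisOfFinrankEq K W hι.symm).reindex (Fintype.equivFin ι).symm
    have hb : ∀ i, ∃ x ∈ S, f x = b i := fun i => by
      rw [← Submodule.mem_map, htop]
      trivial
    choose v hvS hv using hb
    refine ⟨v, hvS, LinearIndependent.of_comp f ?_⟩
    rw [show f ∘ v = b from funext hv]
    exact b.linearIndependent
  · rintro ⟨v, hvS, hv⟩
    have hspan : Submodule.span K (Set.range v) ≤ S :=
      Submodule.span_le.2 (Set.range_subset_iff.2 hvS)
    rw [eq_top_iff, ← (hv.map (hS.mono_left hspan)).span_eq_top_of_card_eq_finrank' hι,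
      Set.range_comp, ← Submodule.map_span]
    exact Submodule.map_mono hspan

theorem exists_linearIndependent_three_iff {K V : Type*} [Semiring K] [AddCommMonoid V]
    [Module K V] (S : Submodule K V) :
    (∃ x y z, x ∈ S ∧ y ∈ S ∧ z ∈ S ∧ LinearIndependent K ![x, y, z]) ↔
      ∃ v : Fin 3 → V, (∀ i, v i ∈ S) ∧ LinearIndependent K v := by
  constructor
  · rintro ⟨x, y, z, hx, hy, hz, hv⟩
    exact ⟨![x, y, z], fun i => by fin_cases i <;> assumption, hv⟩
  · rintro ⟨v, hS, hv⟩
    refine ⟨v 0, v 1, v 2, hS 0, hS 1, hS 2, ?_⟩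
    convert hv
    ext i
    fin_cases i <;> rfl

open Finset in
theorem sum_antidiagonal_eq_add_sum_range {M : Type*} [AddCommMonoid M] (f : ℕ → ℕ → M) (j : ℕ) :
    ∑ p ∈ antidiagonal j, f p.1 p.2 = f 0 j + ∑ l ∈ range j, f (j - l) l := by
  rw [← Finset.Nat.sum_antidiagonal_swap]
  simp only [Prod.fst_swap, Prod.snd_swap]
  rw [Finset.Nat.sum_antidiagonal_eq_sum_range_succ (fun l k => f k l), Finset.sum_range_succ,
    Nat.sub_self, add_comm]

@[simp]
theorem laurentDeriv_coeff (f : LaurentSeries ℂ) (n : ℤ) :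
    (laurentDeriv f).coeff n = ((n + 1 : ℤ) : ℂ) * f.coeff (n + 1) :=
  rfl

theorem laurentDeriv_add (f g : LaurentSeries ℂ) :
    laurentDeriv (f + g) = laurentDeriv f + laurentDeriv g := by
  ext n
  simp [mul_add]

theorem laurentDeriv_smul (c : ℂ) (f : LaurentSeries ℂ) :
    laurentDeriv (c • f) = c • laurentDeriv f := by
  ext n
  simp [mul_left_comm]

noncomputable def thirdOrderOp (a b : LaurentSeries ℂ) :
    LaurentSeries ℂ →ₗ[ℂ] LaurentSeries ℂ where
  toFun ψ := laurentDeriv (laurentDeriv (laurentDeriv ψ)) + a * laurentDeriv ψ + b * ψ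
  map_add' ψ χ := by
    simp only [laurentDeriv_add]
    ring
  map_smul' c ψ := by
    simp only [laurentDeriv_smul, RingHom.id_apply]
    simp only [← C_mul_eq_smul]
    ring

theorem coeff_single_mul_ofPowerSeries_add {R : Type*} [Semiring R] (m : ℤ) (φ : PowerSeries R)
    (j : ℕ) :
    (single m 1 * ofPowerSeries ℤ R φ).coeff (m + j) = coeff j φ := by
  rw [coeff_single_mul, one_mul, add_sub_cancel_left, ofPowerSeries_apply_coeff]

theorem coeff_single_mul_ofPowerSeries_of_lt {R : Type*} [Semiring R] (m : ℤ)
    (φ : PowerSeries R) {n : ℤ} (hn : n < m) : (single m 1 * ofPowerSeries ℤ R φ).coeff n = 0 := by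
  rw [coeff_single_mul, one_mul, ofPowerSeries_apply]
  refine embDomain_of_notMem_range ?_
  rintro ⟨k, hk⟩
  have : (k : ℤ) = n - m := hk
  omega

/-- `θ + m`, where `θ = z d/dz`. -/
noncomputable def eulerShift (m : ℤ) (φ : PowerSeries ℂ) : PowerSeries ℂ :=
  mk fun j => ((j : ℂ) + m) * coeff j φ

theorem laurentDeriv_single_mul_ofPowerSeries (m : ℤ) (φ : PowerSeries ℂ) :
    laurentDeriv (single m 1 * ofPowerSeries ℤ ℂ φ)
      = single (m - 1) 1 * ofPowerSeries ℤ ℂ (eulerShift m φ) := by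
  ext n
  rcases lt_or_ge n (m - 1) with hn | hn
  · rw [laurentDeriv_coeff, coeff_single_mul_ofPowerSeries_of_lt _ _ (by omega),
      coeff_single_mul_ofPowerSeries_of_lt _ _ hn, mul_zero]
  · obtain ⟨j, rfl⟩ := Int.le.dest hn
    rw [laurentDeriv_coeff, show m - 1 + j + 1 = m + j by ring,
      coeff_single_mul_ofPowerSeries_add, coeff_single_mul_ofPowerSeries_add, eulerShift,
      PowerSeries.coeff_mk]
    push_cast
    ring

theorem single_mul_ofPowerSeries_mul {R : Type*} [CommSemiring R] (r s : ℤ)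
    (φ χ : PowerSeries R) :
    single r 1 * ofPowerSeries ℤ R φ * (single s 1 * ofPowerSeries ℤ R χ)
      = single (r + s) 1 * ofPowerSeries ℤ R (φ * χ) := by
  rw [mul_mul_mul_comm, single_mul_single, one_mul, map_mul]

theorem exists_eq_single_mul_ofPowerSeries {R : Type*} [Semiring R] {ψ : LaurentSeries R} {m : ℤ}
    (h : m ≤ ψ.order) : ∃ χ : PowerSeries R, ψ = single m 1 * ofPowerSeries ℤ R χ := by
  refine ⟨PowerSeries.X ^ (ψ.order - m).toNat * ψ.powerSeriesPart, ?_⟩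
  rw [map_mul, ofPowerSeries_X_pow, ← mul_assoc, single_mul_single, one_mul,
    Int.toNat_of_nonneg (by omega), add_sub_cancel, LaurentSeries.single_order_mul_powerSeriesPart]

/-- The indicial polynomial at `0` of `∂³ + z⁻²A(z) ∂ + z⁻³B(z)`. -/
def indicialPoly (A B : ℕ → ℂ) (s : ℂ) : ℂ :=
  s * (s - 1) * (s - 2) + A 0 * s + B 0

/-- The `j`-th coefficient of `z^(3-m) L (z^m Σ cⱼ zʲ)`. -/
def frobeniusCoeff (A B : ℕ → ℂ) (m : ℤ) (c : ℕ → ℂ) (j : ℕ) : ℂ :=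
  indicialPoly A B (j + m) * c j
    + ∑ l ∈ Finset.range j, (A (j - l) * (l + m) + B (j - l)) * c l

theorem thirdOrderOp_single_mul_ofPowerSeries (A B : ℕ → ℂ) (m : ℤ) (φ : PowerSeries ℂ) :
    thirdOrderOp (single (-2) 1 * ofPowerSeries ℤ ℂ (mk A))
        (single (-3) 1 * ofPowerSeries ℤ ℂ (mk B)) (single m 1 * ofPowerSeries ℤ ℂ φ)
      = single (m - 3) 1 * ofPowerSeries ℤ ℂ (mk (frobeniusCoeff A B m fun j => coeff j φ)) := by
  change laurentDeriv (laurentDeriv (laurentDeriv _)) + _ * laurentDeriv _ + _ * _ = _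
  simp only [laurentDeriv_single_mul_ofPowerSeries, single_mul_ofPowerSeries_mul]
  rw [show m - 1 - 1 - 1 = m - 3 by ring, show -2 + (m - 1) = m - 3 by ring,
    show -3 + m = m - 3 by ring, ← mul_add, ← mul_add, ← map_add, ← map_add]
  congr 2
  ext j
  simp only [map_add, PowerSeries.coeff_mul, eulerShift, PowerSeries.coeff_mk, frobeniusCoeff,
    indicialPoly]
  rw [add_assoc, ← Finset.sum_add_distrib,
    sum_antidiagonal_eq_add_sum_range (fun k l => A k * ((l + m) * coeff l φ) + B k * coeff l φ)]
  have tail : ∑ l ∈ Finset.range j, (A (j - l) * ((l + m) * coeff l φ) + B (j - l) * coeff l φ)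
      = ∑ l ∈ Finset.range j, (A (j - l) * (l + m) + B (j - l)) * coeff l φ :=
    Finset.sum_congr rfl fun l _ => by ring
  rw [tail]
  push_cast
  ring

section Frobenius

variable {A B : ℕ → ℂ}

theorem indicialPoly_eq (hA0 : A 0 = -3) (hB0 : B 0 = 3) (s : ℂ) :
    indicialPoly A B s = (s + 1) * (s - 1) * (s - 3) := by
  rw [indicialPoly, hA0, hB0]
  ring

theorem indicialPoly_intCast_eq_zero_iff (hA0 : A 0 = -3) (hB0 : B 0 = 3) {k : ℤ} :
    indicialPoly A B k = 0 ↔ k = -1 ∨ k = 1 ∨ k = 3 := by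
  rw [indicialPoly_eq hA0 hB0]
  simp only [mul_eq_zero, add_eq_zero_iff_eq_neg, sub_eq_zero, or_assoc]
  norm_cast

theorem indicialPoly_neg_one_eq_zero_iff (hA0 : A 0 = -3) (hB0 : B 0 = 3) {j : ℕ} :
    indicialPoly A B (j + (-1 : ℤ)) = 0 ↔ j = 0 ∨ j = 2 ∨ j = 4 := by
  rw [← Int.cast_natCast, ← Int.cast_add, indicialPoly_intCast_eq_zero_iff hA0 hB0]
  omega

theorem eq_zero_of_frobeniusCoeff_eq_zero {m : ℤ} {c : ℕ → ℂ}
    (hc : ∀ j, frobeniusCoeff A B m c j = 0)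
    (hres : ∀ j : ℕ, indicialPoly A B (j + m) = 0 → c j = 0) (j : ℕ) : c j = 0 := by
  induction j using Nat.strong_induction_on with
  | _ j ih =>
    by_cases hP : indicialPoly A B (j + m) = 0
    · exact hres j hP
    have htail : ∑ l ∈ Finset.range j, (A (j - l) * (l + m) + B (j - l)) * c l = 0 :=
      Finset.sum_eq_zero fun l hl => by rw [ih l (Finset.mem_range.1 hl), mul_zero]
    have hj := hc j
    rw [frobeniusCoeff, htail, add_zero] at hj
    exact (mul_eq_zero.1 hj).resolve_left hP

variable (A B) in
/-- Solves `frobeniusCoeff A B m c j = 0` for `c j` wherever the indicial polynomial allows,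
taking `c j = d j` at the roots `j + m`. -/
noncomputable def frobeniusSeq (m : ℤ) (d : ℕ → ℂ) (j : ℕ) : ℂ :=
  if indicialPoly A B (j + m) = 0 then d j
  else -(∑ l ∈ (Finset.range j).attach,
      (A (j - l) * (l + m) + B (j - l)) * frobeniusSeq m d l) / indicialPoly A B (j + m)
termination_by j
decreasing_by exact Finset.mem_range.1 l.2

theorem frobeniusSeq_of_indicialPoly_eq_zero {m : ℤ} {d : ℕ → ℂ} {j : ℕ}
    (h : indicialPoly A B (j + m) = 0) : frobeniusSeq A B m d j = d j := by
  rw [frobeniusSeq, if_pos h]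

theorem frobeniusCoeff_frobeniusSeq_of_indicialPoly_ne_zero {m : ℤ} {d : ℕ → ℂ} {j : ℕ}
    (h : indicialPoly A B (j + m) ≠ 0) : frobeniusCoeff A B m (frobeniusSeq A B m d) j = 0 := by
  rw [frobeniusCoeff, frobeniusSeq, if_neg h, Finset.sum_attach (Finset.range j)
    fun l => (A (j - l) * (l + m) + B (j - l)) * frobeniusSeq A B m d l]
  field_simp
  ring

variable (A B) in
/-- The steps `j = 2, 4` of the recursion for `z⁻¹ Σ cⱼ zʲ`, where the indicial polynomial
vanishes, with `c₁` and `c₃` determined by the steps `j = 1, 3`. -/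
def ResonanceEqs (c₀ c₂ : ℂ) : Prop :=
  let c₁ := (A 1 - B 1) * c₀ / 3
  let c₃ := ((B 3 - A 3) * c₀ + B 2 * c₁ + (A 1 + B 1) * c₂) / 3
  B 1 * c₁ + (B 2 - A 2) * c₀ = 0 ∧
    (2 * A 1 + B 1) * c₃ + (A 2 + B 2) * c₂ + B 3 * c₁ + (B 4 - A 4) * c₀ = 0

variable (A B) in
def ResonanceFree : Prop :=
  ∀ c₀ c₂ : ℂ, ResonanceEqs A B c₀ c₂

theorem frobeniusCoeff_two_four_eq_zero_iff (hA0 : A 0 = -3) (hB0 : B 0 = 3) {c : ℕ → ℂ}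
    (h1 : frobeniusCoeff A B (-1) c 1 = 0) (h3 : frobeniusCoeff A B (-1) c 3 = 0) :
    frobeniusCoeff A B (-1) c 2 = 0 ∧ frobeniusCoeff A B (-1) c 4 = 0 ↔
      ResonanceEqs A B (c 0) (c 2) := by
  simp only [ResonanceEqs, frobeniusCoeff, indicialPoly_eq hA0 hB0, Finset.sum_range_succ,
    Finset.sum_range_zero] at h1 h3 ⊢
  norm_num at h1 h3 ⊢
  have hc1 : c 1 = (A 1 - B 1) * c 0 / 3 := by linear_combination h1 / 3
  have hc3 : c 3 = ((B 3 - A 3) * c 0 + B 2 * c 1 + (A 1 + B 1) * c 2) / 3 := by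
    linear_combination -h3 / 3
  rw [hc3, hc1]
  constructor <;> rintro ⟨h2, h4⟩ <;> exact ⟨by linear_combination h2, by linear_combination h4⟩

end Frobenius

section SolutionSpace

variable {A B : ℕ → ℂ}

variable (A B) in
noncomputable def solutionSpace : Submodule ℂ (LaurentSeries ℂ) :=
  LinearMap.ker (thirdOrderOp (single (-2) 1 * ofPowerSeries ℤ ℂ (mk A))
    (single (-3) 1 * ofPowerSeries ℤ ℂ (mk B)))

theorem single_mul_ofPowerSeries_mem_solutionSpace_iff (m : ℤ) (φ : PowerSeries ℂ) :
    single m 1 * ofPowerSeries ℤ ℂ φ ∈ solutionSpace A B ↔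
      ∀ j, frobeniusCoeff A B m (fun l => coeff l φ) j = 0 := by
  rw [solutionSpace, LinearMap.mem_ker, thirdOrderOp_single_mul_ofPowerSeries, mul_eq_zero,
    or_iff_right (single_ne_zero one_ne_zero), map_eq_zero_iff _ ofPowerSeries_injective,
    PowerSeries.ext_iff]
  simp

theorem neg_one_le_order_of_mem_solutionSpace (hA0 : A 0 = -3) (hB0 : B 0 = 3)
    {ψ : LaurentSeries ℂ} (hψ : ψ ∈ solutionSpace A B) (hψ0 : ψ ≠ 0) : -1 ≤ ψ.order := by
  rw [← ψ.single_order_mul_powerSeriesPart, single_mul_ofPowerSeries_mem_solutionSpace_iff] at hψ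
  have h0 := hψ 0
  rw [frobeniusCoeff, Finset.sum_range_zero, add_zero, LaurentSeries.powerSeriesPart_coeff] at h0
  simp only [Nat.cast_zero, zero_add, add_zero] at h0
  have hroot := (mul_eq_zero.1 h0).resolve_right (mt coeff_order_eq_zero.1 hψ0)
  rcases (indicialPoly_intCast_eq_zero_iff hA0 hB0).1 hroot with h | h | h <;> omega

theorem exists_eq_single_neg_one_mul_of_mem_solutionSpace (hA0 : A 0 = -3) (hB0 : B 0 = 3)
    {ψ : LaurentSeries ℂ} (hψ : ψ ∈ solutionSpace A B) :
    ∃ χ : PowerSeries ℂ, ψ = single (-1) 1 * ofPowerSeries ℤ ℂ χ := by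
  rcases eq_or_ne ψ 0 with rfl | hψ0
  · exact ⟨0, by simp⟩
  · exact exists_eq_single_mul_ofPowerSeries (neg_one_le_order_of_mem_solutionSpace hA0 hB0 hψ hψ0)

noncomputable def coeffAtIndices : LaurentSeries ℂ →ₗ[ℂ] Fin 3 → ℂ :=
  LinearMap.pi fun i => coeff.linearMap (R := ℂ) ((![-1, 1, 3] : Fin 3 → ℤ) i)

theorem coeffAtIndices_single_neg_one_mul (χ : PowerSeries ℂ) :
    coeffAtIndices (single (-1) 1 * ofPowerSeries ℤ ℂ χ) = ![coeff 0 χ, coeff 2 χ, coeff 4 χ] := by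
  ext i
  fin_cases i
  · simpa [coeffAtIndices] using coeff_single_mul_ofPowerSeries_add (-1) χ 0
  · simpa [coeffAtIndices] using coeff_single_mul_ofPowerSeries_add (-1) χ 2
  · simpa [coeffAtIndices] using coeff_single_mul_ofPowerSeries_add (-1) χ 4

theorem disjoint_solutionSpace_ker_coeffAtIndices (hA0 : A 0 = -3) (hB0 : B 0 = 3) :
    Disjoint (solutionSpace A B) (LinearMap.ker coeffAtIndices) := by
  rw [Submodule.disjoint_def]
  intro ψ hψ hker
  obtain ⟨χ, rfl⟩ := exists_eq_single_neg_one_mul_of_mem_solutionSpace hA0 hB0 hψ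
  rw [LinearMap.mem_ker, coeffAtIndices_single_neg_one_mul] at hker
  rw [single_mul_ofPowerSeries_mem_solutionSpace_iff] at hψ
  have hχ : χ = 0 := by
    ext j
    refine eq_zero_of_frobeniusCoeff_eq_zero hψ (fun l hl => ?_) j
    rcases (indicialPoly_neg_one_eq_zero_iff hA0 hB0).1 hl with rfl | rfl | rfl
    exacts [congrFun hker 0, congrFun hker 1, congrFun hker 2]
  simp [hχ]

theorem map_coeffAtIndices_solutionSpace_eq_top_iff (hA0 : A 0 = -3) (hB0 : B 0 = 3) :
    (solutionSpace A B).map coeffAtIndices = ⊤ ↔ ResonanceFree A B := by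
  constructor
  · intro htop c₀ c₂
    obtain ⟨ψ, hψ, hψc⟩ : ∃ ψ ∈ solutionSpace A B, coeffAtIndices ψ = ![c₀, c₂, 0] := by
      rw [← Submodule.mem_map, htop]
      trivial
    obtain ⟨χ, rfl⟩ := exists_eq_single_neg_one_mul_of_mem_solutionSpace hA0 hB0 hψ
    rw [coeffAtIndices_single_neg_one_mul] at hψc
    rw [single_mul_ofPowerSeries_mem_solutionSpace_iff] at hψ
    have h0 : coeff 0 χ = c₀ := congrFun hψc 0
    have h2 : coeff 2 χ = c₂ := congrFun hψc 1
    have hres := (frobeniusCoeff_two_four_eq_zero_iff hA0 hB0 (hψ 1) (hψ 3)).1 ⟨hψ 2, hψ 4⟩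
    rwa [h0, h2] at hres
  · intro hres
    rw [eq_top_iff]
    rintro w -
    let c := frobeniusSeq A B (-1) fun j => if j = 0 then w 0 else if j = 2 then w 1 else w 2
    have hc : ∀ j, ¬(j = 0 ∨ j = 2 ∨ j = 4) → frobeniusCoeff A B (-1) c j = 0 := fun j hj =>
      frobeniusCoeff_frobeniusSeq_of_indicialPoly_ne_zero
        (mt (indicialPoly_neg_one_eq_zero_iff hA0 hB0).1 hj)
    have hc24 := (frobeniusCoeff_two_four_eq_zero_iff hA0 hB0 (hc 1 (by omega))
      (hc 3 (by omega))).2 (hres (c 0) (c 2))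
    refine ⟨single (-1) 1 * ofPowerSeries ℤ ℂ (mk c),
      (single_mul_ofPowerSeries_mem_solutionSpace_iff _ _).2 fun j => ?_, ?_⟩
    · simp only [PowerSeries.coeff_mk]
      rcases em (j = 0 ∨ j = 2 ∨ j = 4) with (rfl | rfl | rfl) | hj
      · rw [frobeniusCoeff, (indicialPoly_neg_one_eq_zero_iff hA0 hB0).2 (Or.inl rfl),
          Finset.sum_range_zero, zero_mul, add_zero]
      · exact hc24.1
      · exact hc24.2
      · exact hc j hj
    · have hd : ∀ j, j = 0 ∨ j = 2 ∨ j = 4 → c j = _ := fun j hj =>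
        frobeniusSeq_of_indicialPoly_eq_zero ((indicialPoly_neg_one_eq_zero_iff hA0 hB0).2 hj)
      rw [coeffAtIndices_single_neg_one_mul]
      ext i
      fin_cases i <;> simp [hd]

end SolutionSpace

theorem single_mul_ofPowerSeries_mk_sub_single (B : ℕ → ℂ) (lam : ℂ) :
    single (-3) 1 * ofPowerSeries ℤ ℂ (mk (B - Pi.single 3 lam : ℕ → ℂ))
      = single (-3) 1 * ofPowerSeries ℤ ℂ (mk B) - C lam := by
  have hmk : PowerSeries.mk (B - Pi.single 3 lam)
      = PowerSeries.mk B - PowerSeries.C lam * PowerSeries.X ^ 3 := by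
    ext j
    simp [PowerSeries.coeff_X_pow, Pi.single_apply]
  rw [hmk, map_sub, mul_sub, map_mul, ofPowerSeries_C, ofPowerSeries_X_pow, mul_left_comm,
    single_mul_single]
  norm_num

theorem eq_smul_iff_mem_solutionSpace (A B : ℕ → ℂ) (lam : ℂ) (ψ : LaurentSeries ℂ) :
    laurentDeriv (laurentDeriv (laurentDeriv ψ)) + single (-2) 1 * ofPowerSeries ℤ ℂ (mk A)
        * laurentDeriv ψ + single (-3) 1 * ofPowerSeries ℤ ℂ (mk B) * ψ = lam • ψ ↔
      ψ ∈ solutionSpace A (B - Pi.single 3 lam) := by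
  rw [solutionSpace, LinearMap.mem_ker, single_mul_ofPowerSeries_mk_sub_single, ← sub_eq_zero]
  change _ ↔ _ + _ + (_ - C lam) * ψ = 0
  rw [sub_mul, C_mul_eq_smul, add_sub_assoc]

theorem forall_resonanceFree_sub_single_iff (A B : ℕ → ℂ) :
    (∀ lam : ℂ, ResonanceFree A (B - Pi.single 3 lam)) ↔
      A 1 = 0 ∧ B 2 = 0 ∧ A 2 = -(B 1) ^ 2 / 3 ∧ B 4 = A 4 + B 1 * A 3 / 3 := by
  constructor
  · intro h
    obtain ⟨e2, e4₀⟩ := h 0 1 0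
    obtain ⟨-, e4'⟩ := h 0 0 1
    obtain ⟨-, e4₃⟩ := h 3 1 0
    simp only [Pi.sub_apply, Pi.single_apply] at e2 e4₀ e4' e4₃
    norm_num at e2 e4₀ e4' e4₃
    have ha1 : A 1 = 0 := by linear_combination (e4₀ - e4₃) / 3
    have hb2 : B 2 = 0 := by linear_combination (e2 + e4') / 2 - (A 1 + 2 * B 1) / 3 * ha1
    refine ⟨ha1, hb2, by linear_combination -e2 + B 1 / 3 * ha1 + hb2, ?_⟩
    linear_combination e4₀ - (2 * (B 3 - A 3) / 3 + B 3 / 3) * ha1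
      - ((2 * A 1 + B 1) * (A 1 - B 1) / 9) * hb2
  · rintro ⟨ha1, hb2, ha2, hb4⟩ lam c₀ c₂
    simp only [ResonanceEqs, Pi.sub_apply, Pi.single_apply]
    norm_num [ha1, hb2, ha2, hb4]
    constructor <;> ring

/-- Lemma 4.1: for the third-order operator `L = ∂³ + a(z)∂ + b(z)` with
`a = Σ_{k≥0} a_k z^{k−2}`, `b = Σ_{k≥0} b_k z^{k−3}`, `a₀ = −3`, `b₀ = 3`
(indices `−1, 1, 3` at `0`), the equation `ψ''' + aψ' + bψ = λψ` admits three
linearly independent formal Laurent series solutions for every `λ ∈ ℂ` if and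
only if `a₁ = 0`, `b₂ = 0`, `a₂ = −b₁²/3` and `b₄ = a₄ + b₁a₃/3`. -/
theorem third_order_trivial_monodromy_iff
    (aseq bseq : ℕ → ℂ) (ha0 : aseq 0 = -3) (hb0 : bseq 0 = 3)
    (a b : LaurentSeries ℂ)
    (ha : a = HahnSeries.single (-2 : ℤ) 1
        * HahnSeries.ofPowerSeries ℤ ℂ (PowerSeries.mk aseq))
    (hb : b = HahnSeries.single (-3 : ℤ) 1
        * HahnSeries.ofPowerSeries ℤ ℂ (PowerSeries.mk bseq)) :
    (∀ lam : ℂ, ∃ ψ₁ ψ₂ ψ₃ : LaurentSeries ℂ,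
        laurentDeriv (laurentDeriv (laurentDeriv ψ₁)) + a * laurentDeriv ψ₁ + b * ψ₁
          = lam • ψ₁ ∧
        laurentDeriv (laurentDeriv (laurentDeriv ψ₂)) + a * laurentDeriv ψ₂ + b * ψ₂
          = lam • ψ₂ ∧
        laurentDeriv (laurentDeriv (laurentDeriv ψ₃)) + a * laurentDeriv ψ₃ + b * ψ₃
          = lam • ψ₃ ∧
        LinearIndependent ℂ ![ψ₁, ψ₂, ψ₃])
      ↔ (aseq 1 = 0 ∧ bseq 2 = 0 ∧ aseq 2 = -(bseq 1) ^ 2 / 3 ∧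
          bseq 4 = aseq 4 + bseq 1 * aseq 3 / 3) := by
  subst ha hb
  refine (forall_congr' fun lam => ?_).trans (forall_resonanceFree_sub_single_iff aseq bseq)
  have hb0' : (bseq - Pi.single 3 lam : ℕ → ℂ) 0 = 3 := by simpa using hb0
  simp only [eq_smul_iff_mem_solutionSpace]
  rw [exists_linearIndependent_three_iff, ← Submodule.map_eq_top_iff_exists_linearIndependent
    (disjoint_solutionSpace_ker_coeffAtIndices ha0 hb0') (by simp),
    map_coeffAtIndices_solutionSpace_eq_top_iff ha0 hb0']
end

section
/- Let q and r be integers with q ≥ r ≥ 4, r ≡ 1 (mod 3), and q ≡ r (mod 3). Let c ∈ ℂ and let c' : ℕ → ℂ satisfy 2(r−2)(q+2)·c'(0) = ((q−r)/3 + 1)·c and, for every integer k with 1 ≤ k ≤ (r−4)/3, (3k+2)(r−3k−2)(q+3k+2)·c'(k) − 3k(r−3k)(q+3k)·c'(k−1) = ((q−r)/3 + 3k + 1)·c. Then for every integer k with 0 ≤ k ≤ (r−4)/3 there exists a positive real number ρ_k such that c'(k) = ρ_k · c. -/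
/-- The first recurrence argument from the proof of Proposition 3.7(ii): if
`2(r−2)(q+2)·c'(0) = ((q−r)/3 + 1)·c` and
`(3k+2)(r−3k−2)(q+3k+2)·c'(k) − 3k(r−3k)(q+3k)·c'(k−1) = ((q−r)/3 + 3k + 1)·c`
for `1 ≤ k ≤ (r−4)/3`, with `q ≥ r ≥ 4`, `r ≡ 1 (mod 3)`, `q ≡ r (mod 3)`,
then every `c'(k)` with `0 ≤ k ≤ (r−4)/3` is a positive multiple of `c`. -/
theorem recurrence_positive_multiple (q r : ℤ) (hr : 4 ≤ r) (hqr : r ≤ q)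
    (hmod : r % 3 = 1) (hmod' : q % 3 = r % 3)
    (c : ℂ) (c' : ℕ → ℂ)
    (h0 : 2 * ((r : ℂ) - 2) * ((q : ℂ) + 2) * c' 0
        = ((((q - r) / 3 : ℤ) : ℂ) + 1) * c)
    (hrec : ∀ k : ℕ, 1 ≤ k → (k : ℤ) ≤ (r - 4) / 3 →
      (3 * (k : ℂ) + 2) * ((r : ℂ) - 3 * (k : ℂ) - 2) * ((q : ℂ) + 3 * (k : ℂ) + 2) * c' k
        - 3 * (k : ℂ) * ((r : ℂ) - 3 * (k : ℂ)) * ((q : ℂ) + 3 * (k : ℂ)) * c' (k - 1)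
        = ((((q - r) / 3 : ℤ) : ℂ) + 3 * (k : ℂ) + 1) * c) :
    ∀ k : ℕ, (k : ℤ) ≤ (r - 4) / 3 → ∃ ρ : ℝ, 0 < ρ ∧ c' k = (ρ : ℂ) * c := by
  have hm : (0:ℤ) ≤ (q - r) / 3 := Int.ediv_nonneg (by omega) (by norm_num)
  have hmR : (0:ℝ) ≤ (((q - r) / 3 : ℤ) : ℝ) := by exact_mod_cast hm
  have hrR : (4:ℝ) ≤ (r:ℝ) := by exact_mod_cast hr
  have hqR : (r:ℝ) ≤ (q:ℝ) := by exact_mod_cast hqr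
  intro k
  induction k with
  | zero =>
    intro _
    have hA : (0:ℝ) < 2 * ((r:ℝ) - 2) * ((q:ℝ) + 2) := by nlinarith
    refine ⟨((((q - r) / 3 : ℤ) : ℝ) + 1) / (2 * ((r:ℝ) - 2) * ((q:ℝ) + 2)),
      div_pos (by linarith) hA, ?_⟩
    have hAc : (2 * ((r:ℂ) - 2) * ((q:ℂ) + 2)) ≠ 0 := by
      have : ((2 * ((r:ℝ) - 2) * ((q:ℝ) + 2) : ℝ) : ℂ) ≠ 0 := by
        exact_mod_cast hA.ne'
      push_cast at this
      exact this
    have hcast : ((((((q - r) / 3 : ℤ) : ℝ) + 1) / (2 * ((r:ℝ) - 2) * ((q:ℝ) + 2)) : ℝ) : ℂ)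
        = ((((q - r) / 3 : ℤ) : ℂ) + 1) / (2 * ((r:ℂ) - 2) * ((q:ℂ) + 2)) := by
      push_cast; ring
    rw [hcast, div_mul_eq_mul_div, eq_div_iff hAc]
    linear_combination h0
  | succ n ih =>
    intro hk
    have h3 : 3 * ((n:ℤ) + 1) ≤ r - 4 := by
      have : ((n:ℤ) + 1) ≤ (r - 4) / 3 := by exact_mod_cast hk
      omega
    have h3R : 3 * ((n:ℝ) + 1) ≤ (r:ℝ) - 4 := by exact_mod_cast h3
    obtain ⟨ρ, hρ, hcn⟩ := ih (by push_cast at hk ⊢; omega)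
    have hnR : (0:ℝ) ≤ (n:ℝ) := Nat.cast_nonneg n
    have f1 : (0:ℝ) < 3*((n:ℝ)+1)+2 := by linarith
    have f2 : (0:ℝ) < (r:ℝ) - 3*((n:ℝ)+1) - 2 := by linarith
    have f3 : (0:ℝ) < (q:ℝ) + 3*((n:ℝ)+1) + 2 := by linarith
    have g1 : (0:ℝ) < 3*((n:ℝ)+1) := by linarith
    have g2 : (0:ℝ) < (r:ℝ) - 3*((n:ℝ)+1) := by linarith
    have g3 : (0:ℝ) < (q:ℝ) + 3*((n:ℝ)+1) := by linarith
    have hA : (0:ℝ) < (3*((n:ℝ)+1)+2) * ((r:ℝ) - 3*((n:ℝ)+1) - 2) * ((q:ℝ) + 3*((n:ℝ)+1) + 2) :=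
      mul_pos (mul_pos f1 f2) f3
    have hBpos : (0:ℝ) < 3*((n:ℝ)+1) * ((r:ℝ) - 3*((n:ℝ)+1)) * ((q:ℝ) + 3*((n:ℝ)+1)) :=
      mul_pos (mul_pos g1 g2) g3
    refine ⟨(3*((n:ℝ)+1) * ((r:ℝ) - 3*((n:ℝ)+1)) * ((q:ℝ) + 3*((n:ℝ)+1)) * ρ
        + ((((q - r) / 3 : ℤ) : ℝ) + 3*((n:ℝ)+1) + 1))
        / ((3*((n:ℝ)+1)+2) * ((r:ℝ) - 3*((n:ℝ)+1) - 2) * ((q:ℝ) + 3*((n:ℝ)+1) + 2)),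
      div_pos (by nlinarith) hA, ?_⟩
    have hAc : ((3*((n:ℂ)+1)+2) * ((r:ℂ) - 3*((n:ℂ)+1) - 2) * ((q:ℂ) + 3*((n:ℂ)+1) + 2)) ≠ 0 := by
      have : (((3*((n:ℝ)+1)+2) * ((r:ℝ) - 3*((n:ℝ)+1) - 2) * ((q:ℝ) + 3*((n:ℝ)+1) + 2) : ℝ) : ℂ) ≠ 0 := by
        exact_mod_cast hA.ne'
      push_cast at this
      exact this
    have hrec' := hrec (n+1) (by omega) (by exact_mod_cast hk)
    simp only [Nat.add_sub_cancel] at hrec'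
    push_cast at hrec'
    have hcast : (((3*((n:ℝ)+1) * ((r:ℝ) - 3*((n:ℝ)+1)) * ((q:ℝ) + 3*((n:ℝ)+1)) * ρ
        + ((((q - r) / 3 : ℤ) : ℝ) + 3*((n:ℝ)+1) + 1))
        / ((3*((n:ℝ)+1)+2) * ((r:ℝ) - 3*((n:ℝ)+1) - 2) * ((q:ℝ) + 3*((n:ℝ)+1) + 2)) : ℝ) : ℂ)
        = (3*((n:ℂ)+1) * ((r:ℂ) - 3*((n:ℂ)+1)) * ((q:ℂ) + 3*((n:ℂ)+1)) * (ρ:ℂ)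
        + ((((q - r) / 3 : ℤ) : ℂ) + 3*((n:ℂ)+1) + 1))
        / ((3*((n:ℂ)+1)+2) * ((r:ℂ) - 3*((n:ℂ)+1) - 2) * ((q:ℂ) + 3*((n:ℂ)+1) + 2)) := by
      push_cast; ring
    rw [hcast, div_mul_eq_mul_div, eq_div_iff hAc]
    linear_combination hrec' + 3*((n:ℂ)+1) * ((r:ℂ) - 3*((n:ℂ)+1)) * ((q:ℂ) + 3*((n:ℂ)+1)) * hcn
end

section
/- Let m be a nonnegative integer, let (c_j)_{j≥1} be complex numbers, set u = −m(m+1)z⁻² + Σ_{j≥1} c_j z^j ∈ ℂ((z)), and fix λ ∈ ℂ. Then the set of ψ ∈ ℂ((z)) satisfying ψ'' + uψ = λψ contains two linearly independent elements if and only if there exists a solution of the form ψ = Σ_{n≥0} a_n z^{n−m} with a₀ = 1. -/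
open HahnSeries

/-!
Comparing the coefficients of `z^(v-2)`, where `v` is the order of a nonzero solution, gives the
indicial equation `v(v-1) = m(m+1)`, so every nonzero solution has order `-m` or `m+1`. Hence a
solution whose coefficients at `z^(-m)` and `z^(m+1)` both vanish is zero, and two independent
solutions cannot both have vanishing `z^(-m)`-coefficient; rescaling one that does not gives the
normalised lower solution. Conversely, at the upper index `m+1` the coefficient recurrence never
degenerates, so there is always a solution `z^(m+1)(1 + O(z))`, independent of the lower one.
-/

section CoeffLemmas

variable {R : Type*} [CommSemiring R]

lemma coeff_single_one_mul_ofPowerSeries (s : ℤ) (P : PowerSeries R) (n : ℕ) :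
    (single s 1 * ofPowerSeries ℤ R P).coeff (n + s) = PowerSeries.coeff n P := by
  rw [coeff_single_mul_add, one_mul, ofPowerSeries_apply_coeff]

lemma coeff_single_one_mul_ofPowerSeries_of_lt {s k : ℤ} (P : PowerSeries R) (hk : k < s) :
    (single s 1 * ofPowerSeries ℤ R P).coeff k = 0 := by
  rw [← sub_add_cancel k s, coeff_single_mul_add, one_mul, PowerSeries.coeff_coe,
    if_pos (by omega)]

lemma coeff_ofPowerSeries_mul_of_lt_order (P : PowerSeries R) {x : LaurentSeries R} {k : ℤ}
    (hk : k < x.order) : (ofPowerSeries ℤ R P * x).coeff k = 0 := by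
  rw [← LaurentSeries.single_order_mul_powerSeriesPart x, mul_left_comm, ← map_mul]
  exact coeff_single_one_mul_ofPowerSeries_of_lt _ hk

lemma exists_eq_single_mul_ofPowerSeries_s8 {x : LaurentSeries R} {s : ℤ} (hs : x.order = s)
    (h : x.coeff s = 1) :
    ∃ a : ℕ → R, a 0 = 1 ∧ x = single s 1 * ofPowerSeries ℤ R (PowerSeries.mk a) := by
  subst hs
  exact ⟨fun n => x.coeff (x.order + n), by simpa using h,
    (LaurentSeries.single_order_mul_powerSeriesPart x).symm⟩

end CoeffLemmas

lemma linearIndependent_pair_of_coeff {K Γ : Type*} [Field K] [PartialOrder Γ]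
    {x y : HahnSeries Γ K} {i j : Γ} (hx : x.coeff i ≠ 0) (hy : y.coeff i = 0)
    (hy' : y.coeff j ≠ 0) : LinearIndependent K ![x, y] := by
  refine LinearIndependent.pair_iff.2 fun a b hab => ?_
  have ha : a = 0 := by simpa [hy, hx] using congrArg (coeff · i) hab
  subst ha
  simpa [hy'] using congrArg (coeff · j) hab

lemma coeff_laurentDeriv (f : LaurentSeries ℂ) (n : ℤ) :
    (laurentDeriv f).coeff n = ((n : ℂ) + 1) * f.coeff (n + 1) := by
  simp [laurentDeriv]

lemma laurentDeriv_eq_derivative (f : LaurentSeries ℂ) :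
    laurentDeriv f = LaurentSeries.derivative ℂ f := by
  ext n
  simp [laurentDeriv]

noncomputable def solutions (u : LaurentSeries ℂ) (lam : ℂ) : Submodule ℂ (LaurentSeries ℂ) where
  carrier := {x | laurentDeriv (laurentDeriv x) + u * x = lam • x}
  add_mem' {x y} hx hy := by
    simp only [Set.mem_ofPred_eq, laurentDeriv_eq_derivative, map_add] at *
    rw [mul_add, smul_add, ← hx, ← hy]
    abel
  zero_mem' := by simp [laurentDeriv_eq_derivative]
  smul_mem' r x hx := by
    simp only [Set.mem_ofPred_eq, laurentDeriv_eq_derivative, map_smul] at *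
    have hu : u * r • x = r • (u * x) := by
      rw [← single_zero_mul_eq_smul, mul_left_comm, single_zero_mul_eq_smul]
    rw [hu, smul_comm lam r x, ← hx, smul_add]

lemma mem_solutions {u x : LaurentSeries ℂ} {lam : ℂ} :
    x ∈ solutions u lam ↔ laurentDeriv (laurentDeriv x) + u * x = lam • x :=
  Iff.rfl

noncomputable def potential (m : ℕ) (T : PowerSeries ℂ) : LaurentSeries ℂ :=
  single (-2) (-((m : ℂ) * (m + 1))) + ofPowerSeries ℤ ℂ T

section Potential

variable {m : ℕ} {T : PowerSeries ℂ} {lam : ℂ}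

lemma mem_solutions_potential_iff {x : LaurentSeries ℂ} :
    x ∈ solutions (potential m T) lam ↔ ∀ k : ℤ,
      (((k : ℂ) + 2) * (k + 1) - m * (m + 1)) * x.coeff (k + 2)
        + (ofPowerSeries ℤ ℂ T * x).coeff k - lam * x.coeff k = 0 := by
  rw [mem_solutions, ← sub_eq_zero, HahnSeries.ext_iff, funext_iff]
  refine forall_congr' fun k => ?_
  have hsing : (single (-2 : ℤ) (-((m : ℂ) * (m + 1))) * x).coeff k
      = -((m : ℂ) * (m + 1)) * x.coeff (k + 2) := by
    rw [← coeff_single_mul_add (a := k + 2) (b := -2)]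
    ring_nf
  simp only [coeff_sub, coeff_add, potential, add_mul, hsing, coeff_smul, smul_eq_mul, coeff_zero,
    coeff_laurentDeriv, add_assoc k 1 1, one_add_one_eq_two]
  push_cast
  ring_nf

lemma order_eq_neg_or_eq_add_one_of_mem_solutions {x : LaurentSeries ℂ}
    (hx : x ∈ solutions (potential m T) lam)
    (h0 : x ≠ 0) : x.order = -m ∨ x.order = m + 1 := by
  have hv := mem_solutions_potential_iff.1 hx (x.order - 2)
  rw [sub_add_cancel, coeff_ofPowerSeries_mul_of_lt_order T (by omega),
    coeff_eq_zero_of_lt_order (i := x.order - 2) (by omega), mul_zero, sub_zero, add_zero] at hv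
  have hroot : (((x.order + m) * (x.order - (m + 1)) : ℤ) : ℂ) = 0 := by
    push_cast at hv ⊢
    linear_combination (mul_eq_zero.1 hv).resolve_right (coeff_order_eq_zero.not.2 h0)
  rcases mul_eq_zero.1 (Int.cast_eq_zero.1 hroot) with h | h
  · left; omega
  · right; omega

lemma eq_zero_of_mem_solutions_of_coeff_eq_zero {x : LaurentSeries ℂ}
    (hx : x ∈ solutions (potential m T) lam)
    (hlow : x.coeff (-m) = 0) (hhigh : x.coeff (m + 1) = 0) : x = 0 := by
  by_contra h0
  apply coeff_order_eq_zero.not.2 h0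
  rcases order_eq_neg_or_eq_add_one_of_mem_solutions hx h0 with h | h <;> rwa [h]

lemma order_eq_neg_of_mem_solutions_of_coeff_ne_zero {x : LaurentSeries ℂ}
    (hx : x ∈ solutions (potential m T) lam) (hlow : x.coeff (-m) ≠ 0) : x.order = -m := by
  have hle := order_le_of_coeff_ne_zero hlow
  rcases order_eq_neg_or_eq_add_one_of_mem_solutions hx (ne_zero_of_coeff_ne_zero hlow) with h | h
  · exact h
  · omega

lemma exists_mem_solutions_coeff_ne_zero {ψ₁ ψ₂ : LaurentSeries ℂ}
    (h₁ : ψ₁ ∈ solutions (potential m T) lam) (h₂ : ψ₂ ∈ solutions (potential m T) lam)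
    (hind : LinearIndependent ℂ ![ψ₁, ψ₂]) :
    ∃ x ∈ solutions (potential m T) lam, x.coeff (-m) ≠ 0 := by
  by_contra! hlow
  set α := ψ₁.coeff (m + 1)
  set β := ψ₂.coeff (m + 1)
  have hcomb : β • ψ₁ + (-α) • ψ₂ = 0 := by
    refine eq_zero_of_mem_solutions_of_coeff_eq_zero
      (add_mem (Submodule.smul_mem _ _ h₁) (Submodule.smul_mem _ _ h₂)) ?_ ?_
    · simp [hlow ψ₁ h₁, hlow ψ₂ h₂]
    · simp only [coeff_add, coeff_smul, smul_eq_mul, α, β]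
      ring
  have hα : α = 0 := neg_eq_zero.1 (LinearIndependent.pair_iff.1 hind _ _ hcomb).2
  exact hind.ne_zero 0
    (by simpa using eq_zero_of_mem_solutions_of_coeff_eq_zero h₁ (hlow ψ₁ h₁) hα)

end Potential

/-- `(m + 1 + n)(m + n) - m(m + 1) = n(n + 2m + 1)` is the indicial polynomial at the upper index
shifted by `n`; it does not vanish for `n ≥ 1`, so the recurrence can always be solved. -/
noncomputable def upperCoeff (m : ℕ) (T : PowerSeries ℂ) (lam : ℂ) : ℕ → ℂ
  | 0 => 1
  | 1 => 0
  | t + 2 => (lam * upperCoeff m T lam t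
      - ∑ j ∈ Finset.range (t + 1), PowerSeries.coeff j T * upperCoeff m T lam (t - j))
      / ((t + 2) * (t + 2 * m + 3))

lemma single_mul_upperCoeff_mem_solutions (m : ℕ) (T : PowerSeries ℂ) (lam : ℂ) :
    single ((m : ℤ) + 1) 1 * ofPowerSeries ℤ ℂ (PowerSeries.mk (upperCoeff m T lam))
      ∈ solutions (potential m T) lam := by
  set s : ℤ := m + 1
  set b := upperCoeff m T lam
  rw [mem_solutions_potential_iff, mul_left_comm, ← map_mul]
  intro k
  rcases lt_or_ge k (s - 2) with hk | hk
  · simp only [coeff_single_one_mul_ofPowerSeries_of_lt _ (by omega : k + 2 < s),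
      coeff_single_one_mul_ofPowerSeries_of_lt _ (by omega : k < s)]
    ring
  obtain ⟨n, rfl⟩ : ∃ n : ℕ, k = n + (s - 2) := ⟨(k - (s - 2)).toNat, by omega⟩
  rw [show (n : ℤ) + (s - 2) + 2 = n + s by ring]
  rcases n with _ | _ | t
  · rw [coeff_single_one_mul_ofPowerSeries, coeff_single_one_mul_ofPowerSeries_of_lt _ (by omega),
      coeff_single_one_mul_ofPowerSeries_of_lt _ (by omega)]
    simp only [s]
    push_cast
    ring
  · rw [coeff_single_one_mul_ofPowerSeries, coeff_single_one_mul_ofPowerSeries_of_lt _ (by omega),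
      coeff_single_one_mul_ofPowerSeries_of_lt _ (by omega)]
    simp [b, upperCoeff]
  · rw [show ((t + 2 : ℕ) : ℤ) + (s - 2) = t + s by push_cast; ring,
      coeff_single_one_mul_ofPowerSeries, coeff_single_one_mul_ofPowerSeries,
      coeff_single_one_mul_ofPowerSeries, PowerSeries.coeff_mul,
      Finset.Nat.sum_antidiagonal_eq_sum_range_succ
        (fun i j => PowerSeries.coeff i T * PowerSeries.coeff j (PowerSeries.mk b))]
    have hden : ((t : ℂ) + 2) * (t + 2 * m + 3) ≠ 0 := by
      exact_mod_cast (by positivity : (t + 2) * (t + 2 * m + 3) ≠ 0)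
    have hb : ((t : ℂ) + 2) * (t + 2 * m + 3) * b (t + 2) = lam * b t
        - ∑ j ∈ Finset.range (t + 1), PowerSeries.coeff j T * b (t - j) := by
      simp only [b, upperCoeff]
      exact mul_div_cancel₀ _ hden
    simp only [PowerSeries.coeff_mk, s]
    push_cast
    linear_combination hb

/-- For `u = −m(m+1)z⁻² + Σ_{j≥1} c_j z^j ∈ ℂ((z))` and fixed `λ ∈ ℂ`, the equation
`ψ'' + uψ = λψ` admits two linearly independent formal Laurent series solutions
if and only if it admits a solution of the form `ψ = Σ_{n≥0} a_n z^{n−m}` with `a₀ = 1`. -/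
theorem two_independent_solutions_iff_lower_index_solution
    (m : ℕ) (c : ℕ → ℂ) (u : LaurentSeries ℂ)
    (hu : u = HahnSeries.single (-2 : ℤ) (-((m : ℂ) * ((m : ℂ) + 1)))
        + HahnSeries.ofPowerSeries ℤ ℂ (PowerSeries.mk fun j => if j = 0 then 0 else c j))
    (lam : ℂ) :
    (∃ ψ₁ ψ₂ : LaurentSeries ℂ,
        laurentDeriv (laurentDeriv ψ₁) + u * ψ₁ = lam • ψ₁ ∧
        laurentDeriv (laurentDeriv ψ₂) + u * ψ₂ = lam • ψ₂ ∧
        LinearIndependent ℂ ![ψ₁, ψ₂])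
      ↔ (∃ ψ : LaurentSeries ℂ,
          laurentDeriv (laurentDeriv ψ) + u * ψ = lam • ψ ∧
          ∃ a : ℕ → ℂ, a 0 = 1 ∧
            ψ = HahnSeries.single (-(m : ℤ)) 1
              * HahnSeries.ofPowerSeries ℤ ℂ (PowerSeries.mk a)) := by
  obtain rfl : u = potential m (PowerSeries.mk fun j => if j = 0 then 0 else c j) := hu
  generalize PowerSeries.mk (fun j => if j = 0 then 0 else c j) = T
  simp only [← mem_solutions]
  constructor
  · rintro ⟨ψ₁, ψ₂, h₁, h₂, hind⟩
    obtain ⟨x, hx, hlow⟩ := exists_mem_solutions_coeff_ne_zero h₁ h₂ hind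
    have hψ := Submodule.smul_mem _ (x.coeff (-m))⁻¹ hx
    have hψlow : ((x.coeff (-m))⁻¹ • x).coeff (-m) = 1 := by simp [hlow]
    exact ⟨_, hψ, exists_eq_single_mul_ofPowerSeries_s8
      (order_eq_neg_of_mem_solutions_of_coeff_ne_zero hψ (by simp [hψlow])) hψlow⟩
  · rintro ⟨ψ, hψ, a, ha, rfl⟩
    refine ⟨_, _, hψ, single_mul_upperCoeff_mem_solutions m T lam,
      linearIndependent_pair_of_coeff (i := -m) (j := m + 1) ?_ ?_ ?_⟩
    · refine ne_of_eq_of_ne ?_ one_ne_zero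
      simpa [ha] using coeff_single_one_mul_ofPowerSeries (-(m : ℤ)) (PowerSeries.mk a) 0
    · exact coeff_single_one_mul_ofPowerSeries_of_lt _ (by omega)
    · refine ne_of_eq_of_ne ?_ one_ne_zero
      simpa [upperCoeff] using coeff_single_one_mul_ofPowerSeries ((m : ℤ) + 1)
        (PowerSeries.mk (upperCoeff m T lam)) 0
end

section
/- Let K be a field, let V be a finite-dimensional K-vector space, let A, B : V → V be linear maps, and set C = AB − BA. Suppose the rank of C is at most 1 and there exists v ∈ V with Av = 0 and Cv ≠ 0. Then the range of C is contained in the range of A, and the range of A is invariant under B. -/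
/-- If `C = AB - BA` has rank at most 1 and there is `v` with `Av = 0` but `Cv ≠ 0`,
then the range of `C` is contained in the range of `A`, and the range of `A` is
invariant under `B`. -/
theorem range_commutator_le_range_and_range_invariant
    (K : Type*) [Field K] (V : Type*) [AddCommGroup V] [Module K V]
    [FiniteDimensional K V]
    (A B : V →ₗ[K] V) (C : V →ₗ[K] V) (hC : C = A ∘ₗ B - B ∘ₗ A)
    (hrank : LinearMap.rank C ≤ 1)
    (hv : ∃ v : V, A v = 0 ∧ C v ≠ 0) :
    LinearMap.range C ≤ LinearMap.range A ∧
      ∀ x ∈ LinearMap.range A, B x ∈ LinearMap.range A := by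
  obtain ⟨v, hAv, hCv⟩ := hv
  have hCvA : C v = A (B v) := by
    simp [hC, hAv]
  obtain ⟨v₀, hv₀⟩ := (rank_submodule_le_one_iff' (LinearMap.range C)).mp hrank
  have hCvmem : C v ∈ Submodule.span K {v₀} := hv₀ (LinearMap.mem_range_self C v)
  obtain ⟨a, ha⟩ := Submodule.mem_span_singleton.mp hCvmem
  have ha0 : a ≠ 0 := by rintro rfl; simp at ha; exact hCv ha.symm
  have hspan : Submodule.span K {v₀} ≤ Submodule.span K {C v} := by
    rw [Submodule.span_singleton_le_iff_mem, ← ha, Submodule.mem_span_singleton]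
    exact ⟨a⁻¹, by rw [smul_smul, inv_mul_cancel₀ ha0, one_smul]⟩
  have hle : LinearMap.range C ≤ LinearMap.range A := by
    refine (hv₀.trans hspan).trans ?_
    rw [Submodule.span_singleton_le_iff_mem, hCvA]
    exact LinearMap.mem_range_self A (B v)
  refine ⟨hle, ?_⟩
  rintro x ⟨y, rfl⟩
  have : B (A y) = A (B y) - C y := by simp [hC]
  rw [this]
  exact Submodule.sub_mem _ (LinearMap.mem_range_self A (B y)) (hle (LinearMap.mem_range_self C y))
end
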